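/- In the elliptical model Xᵢ = σ·εᵢ with E[σ⁴] < ∞, the correlation of squared returns equals ζ⁽²⁾ = (f₂(1 + 2r²) − 1)/(3f₂ − 1), where f₂ = E[σ⁴]/E[σ²]² and r is the correlation of the Gaussian residuals. -/

import Mathlib

/-!
Conditionally on `σ`, the returns are the Gaussian pair `σ • (ε₁, ε₂)`, so by independence every
moment factorises: `E[(σε₁)^m (σε₂)^n] = E[σ^(m+n)] E[ε₁^m ε₂^n]`. The Gaussian factors are
`E[ε²] = 1`, `E[ε⁴] = 3` and, by polarisation through the fourth moments of `ε₁ ± ε₂`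
(variances `2 ± 2r`), `E[ε₁² ε₂²] = 1 + 2r²`. Writing `E[σ⁴] = f₂ E[σ²]²`, the covariance and the
variances of the squares are `E[σ²]²` times `f₂(1 + 2r²) - 1` and `3f₂ - 1`.
-/

open MeasureTheory ProbabilityTheory Real

def IsBivGaussian {Ω : Type*} [MeasurableSpace Ω] (P : Measure Ω)
    (X Y : Ω → ℝ) (ρ : ℝ) : Prop :=
  ∀ a b : ℝ, Measure.map (fun ω => a * X ω + b * Y ω) P =
    gaussianReal 0 (Real.toNNReal (a ^ 2 + 2 * a * b * ρ + b ^ 2))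

open scoped NNReal Nat

lemma integral_pow_two_mul_gaussianReal (v : ℝ≥0) (n : ℕ) :
    ∫ x, x ^ (2 * n) ∂gaussianReal 0 v = (v : ℝ) ^ n * (2 * n - 1 : ℕ)‼ := by
  rcases eq_or_ne v 0 with rfl | hv
  · rcases n with _ | n <;> simp
  set c : ℝ := 2 * v with hc_def
  have hc : 0 < c := by positivity
  -- the even integrand is a function of `|x|`, which turns it into a Gamma integral over `(0, ∞)`
  let f : ℝ → ℝ := fun y => y ^ ((2 * n : ℕ) : ℝ) * rexp (-c⁻¹ * y ^ (2 : ℝ))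
  have hpdf : ∀ x : ℝ, gaussianPDFReal 0 v x • x ^ (2 * n) = (√π * √c)⁻¹ * f |x| := by
    intro x
    simp only [f, gaussianPDFReal_def, smul_eq_mul, sub_zero]
    rw [rpow_natCast, rpow_two, pow_abs, sq_abs,
      abs_of_nonneg ((even_two_mul n).pow_nonneg x), ← sqrt_mul pi_nonneg, hc_def]
    field_simp
  rw [integral_gaussianReal_eq_integral_smul hv, integral_congr_ae (ae_of_all _ hpdf),
    integral_const_mul, integral_comp_abs (f := f),
    integral_rpow_mul_exp_neg_mul_rpow two_pos (neg_one_lt_zero.trans_le (Nat.cast_nonneg _))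
      (inv_pos.mpr hc)]
  have hexp : ((2 * n : ℕ) + 1 : ℝ) / 2 = n + 1 / 2 := by push_cast; ring
  rw [neg_div, hexp, Gamma_nat_add_half, inv_rpow hc.le, rpow_neg hc.le, inv_inv,
    rpow_add hc, rpow_natCast, ← sqrt_eq_rpow]
  have : √c ≠ 0 := (sqrt_pos.mpr hc).ne'
  have : √π ≠ 0 := (sqrt_pos.mpr pi_pos).ne'
  field_simp
  rw [hc_def, mul_pow]

lemma integrable_pow_gaussianReal (μ : ℝ) (v : ℝ≥0) (n : ℕ) :
    Integrable (fun x => x ^ n) (gaussianReal μ v) :=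
  (integrable_norm_iff (by fun_prop)).mp <| by
    simpa only [norm_pow, id] using (memLp_id_gaussianReal (μ := μ) (v := v) n).integrable_norm_pow'

namespace IsBivGaussian

variable {Ω : Type*} [MeasurableSpace Ω] {P : Measure Ω} {X Y : Ω → ℝ} {ρ : ℝ}

lemma symm (h : IsBivGaussian P X Y ρ) : IsBivGaussian P Y X ρ := fun a b => by
  rw [show (fun ω => a * Y ω + b * X ω) = fun ω => b * X ω + a * Y ω from
    funext fun ω => add_comm _ _, h b a]
  congr 2
  ring

variable (h : IsBivGaussian P X Y ρ) (hX : Measurable X) (hY : Measurable Y)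
include h hX hY

lemma integrable_pow (a b : ℝ) (n : ℕ) :
    Integrable (fun ω => (a * X ω + b * Y ω) ^ n) P := by
  have := integrable_pow_gaussianReal 0 (a ^ 2 + 2 * a * b * ρ + b ^ 2).toNNReal n
  rwa [← h a b, integrable_map_measure (by fun_prop) (by fun_prop)] at this

lemma integral_pow_two_mul (a b : ℝ) (hab : 0 ≤ a ^ 2 + 2 * a * b * ρ + b ^ 2) (n : ℕ) :
    ∫ ω, (a * X ω + b * Y ω) ^ (2 * n) ∂P =
      (a ^ 2 + 2 * a * b * ρ + b ^ 2) ^ n * (2 * n - 1 : ℕ)‼ := by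
  rw [← integral_map (f := fun x => x ^ (2 * n)) (by fun_prop) (by fun_prop), h a b,
    integral_pow_two_mul_gaussianReal, coe_toNNReal _ hab]

lemma integral_pow_two_mul_left (n : ℕ) : ∫ ω, X ω ^ (2 * n) ∂P = (2 * n - 1 : ℕ)‼ := by
  simpa using h.integral_pow_two_mul hX hY 1 0 (by norm_num) n

lemma integral_sq_mul_sq (hρ₁ : -1 ≤ ρ) (hρ₂ : ρ ≤ 1) :
    ∫ ω, X ω ^ 2 * Y ω ^ 2 ∂P = 1 + 2 * ρ ^ 2 := by
  have polarization : (fun ω => X ω ^ 2 * Y ω ^ 2) = fun ω =>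
      ((1 * X ω + 1 * Y ω) ^ 4 + (1 * X ω + -1 * Y ω) ^ 4 - 2 * (1 * X ω + 0 * Y ω) ^ 4
        - 2 * (0 * X ω + 1 * Y ω) ^ 4) / 12 := by
    funext ω; ring
  have := h.integrable_pow hX hY
  rw [polarization, integral_div, integral_sub (by fun_prop) (by fun_prop),
    integral_sub (by fun_prop) (by fun_prop), integral_add (by fun_prop) (by fun_prop),
    integral_const_mul, integral_const_mul]
  simp only [show 4 = 2 * 2 from rfl]
  rw [h.integral_pow_two_mul hX hY 1 1 (by linarith),
    h.integral_pow_two_mul hX hY 1 (-1) (by linarith),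
    h.integral_pow_two_mul hX hY 1 0 (by norm_num), h.integral_pow_two_mul hX hY 0 1 (by norm_num)]
  norm_num
  ring

end IsBivGaussian

lemma ProbabilityTheory.IndepFun.integral_mul_pow_mul_mul_pow {Ω : Type*} [MeasurableSpace Ω]
    {P : Measure Ω} {σ ε₁ ε₂ : Ω → ℝ} (hindep : IndepFun σ (fun ω => (ε₁ ω, ε₂ ω)) P)
    (hσ : Measurable σ) (hε₁ : Measurable ε₁) (hε₂ : Measurable ε₂) (m n : ℕ) :
    ∫ ω, (σ ω * ε₁ ω) ^ m * (σ ω * ε₂ ω) ^ n ∂P =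
      (∫ ω, σ ω ^ (m + n) ∂P) * ∫ ω, ε₁ ω ^ m * ε₂ ω ^ n ∂P := by
  have := hindep.integral_fun_comp_mul_comp (f := fun s => s ^ (m + n))
    (g := fun p : ℝ × ℝ => p.1 ^ m * p.2 ^ n) hσ.aemeasurable (by fun_prop) (by fun_prop)
    (by fun_prop)
  rw [← this]
  congr 1 with ω
  ring

theorem stmt_6_general {Ω : Type*} [MeasurableSpace Ω] (P : Measure Ω)
    (σ ε₁ ε₂ : Ω → ℝ) (hσ : Measurable σ) (hε₁ : Measurable ε₁) (hε₂ : Measurable ε₂)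
    (r : ℝ) (hr₁ : -1 ≤ r) (hr₂ : r ≤ 1)
    (hgauss : IsBivGaussian P ε₁ ε₂ r)
    (hindep : IndepFun σ (fun ω => (ε₁ ω, ε₂ ω)) P)
    (f₂ : ℝ) (hf₂ : f₂ = (∫ ω, (σ ω) ^ 4 ∂P) / (∫ ω, (σ ω) ^ 2 ∂P) ^ 2)
    (h3f₂ : 3 * f₂ > 1) :
    ((∫ ω, (σ ω * ε₁ ω) ^ 2 * (σ ω * ε₂ ω) ^ 2 ∂P) -
        (∫ ω, (σ ω * ε₁ ω) ^ 2 ∂P) * (∫ ω, (σ ω * ε₂ ω) ^ 2 ∂P)) /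
      Real.sqrt (((∫ ω, (σ ω * ε₁ ω) ^ 4 ∂P) - (∫ ω, (σ ω * ε₁ ω) ^ 2 ∂P) ^ 2) *
        ((∫ ω, (σ ω * ε₂ ω) ^ 4 ∂P) - (∫ ω, (σ ω * ε₂ ω) ^ 2 ∂P) ^ 2)) =
    (f₂ * (1 + 2 * r ^ 2) - 1) / (3 * f₂ - 1) := by
  set A := ∫ ω, σ ω ^ 4 ∂P
  set B := ∫ ω, σ ω ^ 2 ∂P
  have moment := hindep.integral_mul_pow_mul_mul_pow hσ hε₁ hε₂
  have gauss₁ := hgauss.integral_pow_two_mul_left hε₁ hε₂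
  have gauss₂ := hgauss.symm.integral_pow_two_mul_left hε₂ hε₁
  have h2₁ : ∫ ω, (σ ω * ε₁ ω) ^ 2 ∂P = B := by
    simpa [gauss₁ 1] using moment 2 0
  have h2₂ : ∫ ω, (σ ω * ε₂ ω) ^ 2 ∂P = B := by
    simpa [gauss₂ 1] using moment 0 2
  have h4₁ : ∫ ω, (σ ω * ε₁ ω) ^ 4 ∂P = 3 * A := by
    simpa [gauss₁ 2, mul_comm] using moment 4 0
  have h4₂ : ∫ ω, (σ ω * ε₂ ω) ^ 4 ∂P = 3 * A := by
    simpa [gauss₂ 2, mul_comm] using moment 0 4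
  have h22 : ∫ ω, (σ ω * ε₁ ω) ^ 2 * (σ ω * ε₂ ω) ^ 2 ∂P = A * (1 + 2 * r ^ 2) := by
    rw [moment, hgauss.integral_sq_mul_sq hε₁ hε₂ hr₁ hr₂]
  -- a vanishing or infinite `E[σ²]` would force the junk value `f₂ = 0`
  have hB : 0 < B := by
    refine (integral_nonneg fun ω => sq_nonneg (σ ω)).lt_of_ne' fun hB0 : B = 0 => ?_
    rw [hB0, zero_pow two_ne_zero, div_zero] at hf₂
    linarith
  have hA : A = f₂ * B ^ 2 := by rw [hf₂]; field_simp
  have hvar : 3 * A - B ^ 2 = (3 * f₂ - 1) * B ^ 2 := by rw [hA]; ring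
  have hvar_pos : 0 < 3 * A - B ^ 2 := hvar ▸ mul_pos (by linarith) (by positivity)
  rw [h22, h2₁, h2₂, h4₁, h4₂, sqrt_mul_self hvar_pos.le, hvar, hA]
  field_simp

/-- In the elliptical model `Xᵢ = σ·εᵢ` with `E[σ⁴] < ∞`, the correlation of squared
returns equals `(f₂(1 + 2r²) - 1)/(3f₂ - 1)` with `f₂ = E[σ⁴]/E[σ²]²`. -/
theorem stmt_6 {Ω : Type*} [MeasurableSpace Ω] (P : Measure Ω) [IsProbabilityMeasure P]
    (σ ε₁ ε₂ : Ω → ℝ) (hσ : Measurable σ) (hε₁ : Measurable ε₁) (hε₂ : Measurable ε₂)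
    (hσpos : ∀ ω, 0 < σ ω) (hσ4 : Integrable (fun ω => (σ ω) ^ 4) P)
    (r : ℝ) (hr₁ : -1 ≤ r) (hr₂ : r ≤ 1)
    (hgauss : IsBivGaussian P ε₁ ε₂ r)
    (hindep : IndepFun σ (fun ω => (ε₁ ω, ε₂ ω)) P)
    (f₂ : ℝ) (hf₂ : f₂ = (∫ ω, (σ ω) ^ 4 ∂P) / (∫ ω, (σ ω) ^ 2 ∂P) ^ 2)
    (h3f₂ : 3 * f₂ > 1) :
    ((∫ ω, (σ ω * ε₁ ω) ^ 2 * (σ ω * ε₂ ω) ^ 2 ∂P) -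
        (∫ ω, (σ ω * ε₁ ω) ^ 2 ∂P) * (∫ ω, (σ ω * ε₂ ω) ^ 2 ∂P)) /
      Real.sqrt (((∫ ω, (σ ω * ε₁ ω) ^ 4 ∂P) - (∫ ω, (σ ω * ε₁ ω) ^ 2 ∂P) ^ 2) *
        ((∫ ω, (σ ω * ε₂ ω) ^ 4 ∂P) - (∫ ω, (σ ω * ε₂ ω) ^ 2 ∂P) ^ 2)) =
    (f₂ * (1 + 2 * r ^ 2) - 1) / (3 * f₂ - 1) :=
  stmt_6_general P σ ε₁ ε₂ hσ hε₁ hε₂ r hr₁ hr₂ hgauss hindep f₂ hf₂ h3f₂
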